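/- Let k be an odd positive integer and m any positive integer. Then the second group cohomology H²(D₂ₖ, ℤ/m) of the dihedral group D₂ₖ of order 2k with coefficients in ℤ/m endowed with the trivial action is isomorphic, as an abelian group, to ℤ/gcd(m,2). -/

import Mathlib

/-!
For odd `n`, a 2-cocycle `f` of `D₂ₙ` with trivial coefficients `A` is a coboundary iff
`f(s, s) - f(1, 1)` is even, where `s` is a reflection; every value occurs, so `H²(D₂ₙ, A) ≅ A/2A`.
The hard direction splits the central extension defined by `f`: after rescaling by central
elements, lifts `S` of `s` and `R` of the rotation satisfy `S² = 1`, `Rⁿ = 1`, `S R S⁻¹ = R⁻¹`.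
For `S` this is where evenness enters. For `R`, if `z = R₀ⁿ` and `u = S R₀ S⁻¹ R₀`, conjugating
`z` by `S` gives `uⁿ = z²`, and as `n` is odd, `R = z u^{-(n+1)/2} R₀` works.
-/

open groupCohomology Representation DihedralGroup

universe u

theorem exists_mem_pow_eq_one_conj_eq_inv {E : Type*} [Group E] {Z : Subgroup E}
    (hZ : Z ≤ Subgroup.center E) {k : ℕ} (hk : Odd k) {R S : E}
    (hRk : R ^ k ∈ Z) (hSR : S * R * S⁻¹ * R ∈ Z) :
    ∃ a ∈ Z, (a * R) ^ k = 1 ∧ S * (a * R) * S⁻¹ = (a * R)⁻¹ := by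
  have central : ∀ c ∈ Z, ∀ x : E, Commute c x := fun c hc x =>
    (Subgroup.mem_center_iff.1 (hZ hc) x).symm
  obtain ⟨z, hz⟩ : ∃ z, R ^ k = z := ⟨_, rfl⟩
  obtain ⟨u, hu⟩ : ∃ u, S * R * S⁻¹ * R = u := ⟨_, rfl⟩
  rw [hz] at hRk
  rw [hu] at hSR
  have hconj : S * R * S⁻¹ = u * R⁻¹ := by rw [← hu]; group
  obtain ⟨n, rfl⟩ := hk
  have huk : u ^ (2 * n + 1) = z ^ 2 := by
    have h := conj_pow (a := S) (b := R) (i := 2 * n + 1)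
    rw [hconj, ((central u hSR R).inv_right).mul_pow, inv_pow, hz, ← (central z hRk S).eq,
      mul_inv_cancel_right, mul_inv_eq_iff_eq_mul] at h
    rw [h, sq]
  obtain ⟨a, ha_def⟩ : ∃ a, z * (u ^ (n + 1))⁻¹ = a := ⟨_, rfl⟩
  have ha : a ∈ Z := ha_def ▸ Z.mul_mem hRk (Z.inv_mem (Z.pow_mem hSR _))
  have hau : a * u = a⁻¹ := by
    rw [← mul_eq_one_iff_eq_inv, ← (central a ha u).right_comm, ← ha_def]
    calc z * (u ^ (n + 1))⁻¹ * (z * (u ^ (n + 1))⁻¹) * u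
        = z * z * ((u ^ (n + 1))⁻¹ * (u ^ (n + 1))⁻¹ * u) := by
          simp only [mul_assoc, (central z hRk _).left_comm]
      _ = z ^ 2 * (u ^ (2 * n + 1))⁻¹ := by rw [sq]; group
      _ = 1 := by rw [huk, mul_inv_cancel]
  refine ⟨a, ha, ?_, ?_⟩
  · rw [(central a ha R).mul_pow, ← ha_def, (central z hRk _).mul_pow, inv_pow, ← pow_mul,
      mul_comm (n + 1), pow_mul, huk, hz]
    group
  · calc S * (a * R) * S⁻¹ = a * (S * R * S⁻¹) := by
          rw [← mul_assoc, ← (central a ha S).eq]; group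
      _ = a⁻¹ * R⁻¹ := by rw [hconj, ← mul_assoc, hau]
      _ = (a * R)⁻¹ := by rw [mul_inv_rev, ((central a ha R).inv_inv).eq]

section

variable {n : ℕ} [NeZero n] {E : Type*} [Group E] {R : E}

theorem pow_val_add_of_pow_eq_one (hR : R ^ n = 1) (i j : ZMod n) :
    R ^ (i + j).val = R ^ i.val * R ^ j.val := by
  rw [ZMod.val_add, ← pow_eq_pow_mod _ hR, pow_add]

theorem pow_val_sub_of_pow_eq_one (hR : R ^ n = 1) (i j : ZMod n) :
    R ^ (j - i).val = (R ^ i.val)⁻¹ * R ^ j.val := by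
  rw [eq_inv_mul_iff_mul_eq, ← pow_val_add_of_pow_eq_one hR, add_sub_cancel]

end

namespace DihedralGroup

variable {n : ℕ} [NeZero n] {E : Type*} [Group E] {R S : E}

def lift (hR : R ^ n = 1) (hS : S ^ 2 = 1) (hSR : S * R * S⁻¹ = R⁻¹) :
    DihedralGroup n →* E where
  toFun
    | r i => R ^ i.val
    | sr i => S * R ^ i.val
  map_one' := by simp only [one_def, ZMod.val_zero, pow_zero]
  map_mul' g h := by
    have hS' : S⁻¹ = S := inv_eq_of_mul_eq_one_right (by rw [← sq, hS])
    have hconj (i : ZMod n) : S * R ^ i.val * S = (R ^ i.val)⁻¹ := by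
      have h := conj_pow (a := S) (b := R) (i := i.val)
      rwa [hSR, inv_pow, hS', eq_comm] at h
    have hcomm (i : ZMod n) : R ^ i.val * S = S * (R ^ i.val)⁻¹ := by
      rw [← hconj, ← mul_assoc, ← mul_assoc, ← sq, hS, one_mul]
    rcases g with i | i <;> rcases h with j | j
    · simp only [r_mul_r, pow_val_add_of_pow_eq_one hR]
    · simp only [r_mul_sr, pow_val_sub_of_pow_eq_one hR, ← mul_assoc, hcomm]
    · simp only [sr_mul_r, pow_val_add_of_pow_eq_one hR, mul_assoc]
    · simp only [sr_mul_sr, pow_val_sub_of_pow_eq_one hR, ← hconj, mul_assoc]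

@[simp] theorem lift_r (hR : R ^ n = 1) (hS : S ^ 2 = 1) (hSR : S * R * S⁻¹ = R⁻¹)
    (i : ZMod n) : lift hR hS hSR (r i) = R ^ i.val := rfl

@[simp] theorem lift_sr (hR : R ^ n = 1) (hS : S ^ 2 = 1) (hSR : S * R * S⁻¹ = R⁻¹)
    (i : ZMod n) : lift hR hS hSR (sr i) = S * R ^ i.val := rfl

end DihedralGroup

namespace groupCohomology

variable {k G : Type u} [CommRing k] [Group G] {A : Rep k G}

theorem mem_coboundaries₂_iff (f : G × G → A) :
    f ∈ coboundaries₂ A ↔ ∃ x : G → A, ∀ g h, A.ρ g (x h) - x (g * h) + x g = f (g, h) := by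
  simp only [coboundaries₂, LinearMap.mem_range, funext_iff, d₁₂_hom_apply, Prod.forall]

noncomputable def H2EquivOfSurjective {Q : Type*} [AddCommGroup Q] [Module k Q]
    (Ψ : cocycles₂ A →ₗ[k] Q) (hΨ : Function.Surjective Ψ)
    (hker : ∀ f, Ψ f = 0 ↔ ⇑f ∈ coboundaries₂ A) : H2 A ≃ₗ[k] Q :=
  have hπ : Function.Surjective (H2π A).hom := (ModuleCat.epi_iff_surjective _).1 inferInstance
  have hker' : LinearMap.ker (H2π A).hom = LinearMap.ker Ψ := by
    ext f
    rw [LinearMap.mem_ker, LinearMap.mem_ker, hker]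
    exact H2π_eq_zero_iff f
  (LinearMap.quotKerEquivOfSurjective _ hπ).symm ≪≫ₗ Submodule.quotEquivOfEq _ _ hker' ≪≫ₗ
    LinearMap.quotKerEquivOfSurjective Ψ hΨ

def cocycles₂DiagSub (s : G) : cocycles₂ A →ₗ[k] A where
  toFun f := f (s, s) - f (1, 1)
  map_add' _ _ := add_sub_add_comm _ _ _ _
  map_smul' c f := (smul_sub c (f (s, s)) (f (1, 1))).symm

@[simp] theorem cocycles₂DiagSub_apply (s : G) (f : cocycles₂ A) :
    cocycles₂DiagSub s f = f (s, s) - f (1, 1) := rfl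

section IsTrivial

variable [A.IsTrivial]

theorem cocycles₂_map_one_snd_of_isTrivial (f : cocycles₂ A) (g : G) : f (g, 1) = f (1, 1) := by
  rw [cocycles₂_map_one_snd, isTrivial_apply]

theorem cocycles₂_map_mul_add_of_isTrivial (f : cocycles₂ A) (g h j : G) :
    f (g * h, j) + f (g, h) = f (h, j) + f (g, h * j) := by
  rw [(mem_cocycles₂_iff f).1 f.2, isTrivial_apply]

theorem even_sub_of_mem_coboundaries₂ {f : G × G → A} (hf : f ∈ coboundaries₂ A) {s : G}
    (hs : s * s = 1) : Even (f (s, s) - f (1, 1)) := by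
  obtain ⟨x, hx⟩ := (mem_coboundaries₂_iff f).1 hf
  refine ⟨x s - x 1, ?_⟩
  rw [← hx, ← hx, hs, mul_one, isTrivial_apply, isTrivial_apply]
  abel

end IsTrivial

variable (A) in
@[ext]
structure CentralExtension (f : cocycles₂ A) where
  a : A
  g : G

namespace CentralExtension

variable {f : cocycles₂ A}

instance : Mul (CentralExtension A f) := ⟨fun x y => ⟨x.a + y.a + f (x.g, y.g), x.g * y.g⟩⟩
-- `f` need not be normalized, hence the identity `(-f (1, 1), 1)`.
instance : One (CentralExtension A f) := ⟨⟨-f (1, 1), 1⟩⟩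
instance : Inv (CentralExtension A f) :=
  ⟨fun x => ⟨-x.a - f (x.g⁻¹, x.g) - f (1, 1), x.g⁻¹⟩⟩

@[simp] theorem mul_a (x y : CentralExtension A f) : (x * y).a = x.a + y.a + f (x.g, y.g) := rfl
@[simp] theorem mul_g (x y : CentralExtension A f) : (x * y).g = x.g * y.g := rfl
@[simp] theorem one_a : (1 : CentralExtension A f).a = -f (1, 1) := rfl
@[simp] theorem one_g : (1 : CentralExtension A f).g = 1 := rfl
@[simp] theorem inv_a (x : CentralExtension A f) :
    x⁻¹.a = -x.a - f (x.g⁻¹, x.g) - f (1, 1) := rfl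
@[simp] theorem inv_g (x : CentralExtension A f) : x⁻¹.g = x.g⁻¹ := rfl

variable [A.IsTrivial]

instance : Group (CentralExtension A f) where
  mul_assoc x y z := by
    ext
    · simp only [mul_a, mul_g]
      linear_combination (norm := abel) cocycles₂_map_mul_add_of_isTrivial f x.g y.g z.g
    · exact mul_assoc _ _ _
  one_mul x := by ext <;> simp [cocycles₂_map_one_fst]
  mul_one x := by ext <;> simp [cocycles₂_map_one_snd_of_isTrivial]
  inv_mul_cancel x := by
    ext
    · simp only [mul_a, inv_a, inv_g, one_a]
      abel
    · exact inv_mul_cancel _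

variable (A f) in
def proj : CentralExtension A f →* G where
  toFun := g
  map_one' := rfl
  map_mul' _ _ := rfl

theorem proj_apply (x : CentralExtension A f) : proj A f x = x.g := rfl

@[simp] theorem pow_g (x : CentralExtension A f) (m : ℕ) : (x ^ m).g = x.g ^ m :=
  map_pow (proj A f) x m

theorem commute_of_g_eq_one {x : CentralExtension A f} (hx : x.g = 1) (y : CentralExtension A f) :
    Commute x y := by
  ext
  · simp [hx, cocycles₂_map_one_fst, cocycles₂_map_one_snd_of_isTrivial, add_comm]
  · simp [hx]

theorem ker_proj_le_center : (proj A f).ker ≤ Subgroup.center (CentralExtension A f) :=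
  fun _ hx => Subgroup.mem_center_iff.2 fun y => (commute_of_g_eq_one hx y).symm.eq

theorem mem_coboundaries₂_of_splitting (σ : G →* CentralExtension A f)
    (hσ : ∀ g, proj A f (σ g) = g) : ⇑f ∈ coboundaries₂ A := by
  refine ⟨fun g => -(σ g).a, funext fun ⟨g, h⟩ => ?_⟩
  have h := congrArg CentralExtension.a (map_mul σ g h)
  simp only [mul_a, ← proj_apply, hσ] at h
  simp only [d₁₂_hom_apply, isTrivial_apply, h]
  abel

end CentralExtension

end groupCohomology

namespace DihedralGroup

open groupCohomology.CentralExtension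

def reflectionCocycle {n : ℕ} {M : Type*} [Zero M] (a : M) :
    DihedralGroup n × DihedralGroup n → M
  | (sr _, sr _) => a
  | _ => 0

variable {n : ℕ} {k : Type} [CommRing k] {A : Rep k (DihedralGroup n)} [A.IsTrivial]

theorem reflectionCocycle_mem_cocycles₂ (a : A) : reflectionCocycle a ∈ cocycles₂ A := by
  rw [mem_cocycles₂_iff]
  rintro (g | g) (h | h) (j | j) <;> simp [reflectionCocycle]

theorem mem_coboundaries₂_of_even (hn : Odd n) (f : cocycles₂ A)
    (hf : Even (f (sr 0, sr 0) - f (1, 1))) : ⇑f ∈ coboundaries₂ A := by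
  have : NeZero n := ⟨hn.pos.ne'⟩
  obtain ⟨y, hy⟩ := hf
  let d : CentralExtension A f := ⟨y, 1⟩
  let S₀ : CentralExtension A f := ⟨0, sr 0⟩
  have hS : (d⁻¹ * S₀) ^ 2 = 1 := by
    have hS₀ : S₀ ^ 2 = d ^ 2 := by
      ext
      · simp only [sq, mul_a, S₀, d]
        linear_combination (norm := abel) hy
      · simp [sq, S₀, d]
    rw [(commute_of_g_eq_one (by simp [d]) S₀).mul_pow, hS₀, inv_pow, inv_mul_cancel]
  let R₀ : CentralExtension A f := ⟨0, r 1⟩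
  obtain ⟨a, ha, hR, hSR⟩ := exists_mem_pow_eq_one_conj_eq_inv ker_proj_le_center hn
    (R := R₀) (S := d⁻¹ * S₀) (by simp [MonoidHom.mem_ker, proj_apply, R₀])
    (by simp [MonoidHom.mem_ker, proj_apply, R₀, S₀, d])
  rw [MonoidHom.mem_ker, proj_apply] at ha
  refine mem_coboundaries₂_of_splitting (lift hR hS hSR) ?_
  rintro (i | i)
  · simp [proj_apply, ha, R₀]
  · simp [proj_apply, ha, R₀, S₀, d]

theorem mem_coboundaries₂_iff_even (hn : Odd n) (f : cocycles₂ A) :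
    ⇑f ∈ coboundaries₂ A ↔ Even (f (sr 0, sr 0) - f (1, 1)) :=
  ⟨fun h => even_sub_of_mem_coboundaries₂ h (sr_mul_self 0), mem_coboundaries₂_of_even hn f⟩

noncomputable def H2EquivOfOdd (hn : Odd n) {Q : Type*} [AddCommGroup Q] [Module k Q]
    (π : A →ₗ[k] Q) (hπ : Function.Surjective π) (hker : ∀ a, π a = 0 ↔ Even a) :
    H2 A ≃ₗ[k] Q :=
  H2EquivOfSurjective (π ∘ₗ cocycles₂DiagSub (sr 0))
    (fun q => by
      obtain ⟨a, rfl⟩ := hπ q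
      refine ⟨⟨reflectionCocycle a, reflectionCocycle_mem_cocycles₂ a⟩, ?_⟩
      simp [reflectionCocycle, one_def, -r_zero])
    (fun f => (hker _).trans (mem_coboundaries₂_iff_even hn f).symm)

end DihedralGroup

theorem ZMod.castHom_gcd_eq_zero_iff (m n : ℕ) (x : ZMod m) :
    ZMod.castHom (Nat.gcd_dvd_left m n) (ZMod (Nat.gcd m n)) x = 0 ↔ (n : ZMod m) ∣ x := by
  obtain ⟨a, rfl⟩ := ZMod.intCast_surjective x
  rw [map_intCast, ZMod.intCast_zmod_eq_zero_iff_dvd]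
  constructor
  · rintro ⟨e, rfl⟩
    refine ⟨(Nat.gcdB m n * e : ℤ), ?_⟩
    rw [Nat.gcd_eq_gcd_ab]
    push_cast
    rw [ZMod.natCast_self]
    ring
  · rintro ⟨y, hy⟩
    obtain ⟨b, rfl⟩ := ZMod.intCast_surjective y
    rw [← Int.cast_natCast, ← Int.cast_mul, ZMod.intCast_eq_intCast_iff_dvd_sub] at hy
    have h1 : (Nat.gcd m n : ℤ) ∣ n * b :=
      (Int.natCast_dvd_natCast.2 (Nat.gcd_dvd_right m n)).mul_right b
    have h2 := (Int.natCast_dvd_natCast.2 (Nat.gcd_dvd_left m n)).trans hy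
    simpa using h1.sub h2

theorem stmt_4_general (k m : ℕ) (hkodd : Odd k) :
    Nonempty
      ((groupCohomology (Rep.trivial ℤ (DihedralGroup k) (ZMod m)) 2) ≃+
        ZMod (Nat.gcd m 2)) := by
  let π := (ZMod.castHom (Nat.gcd_dvd_left m 2) (ZMod (Nat.gcd m 2))).toAddMonoidHom
  have hker (x : ZMod m) : π x = 0 ↔ Even x := by
    simpa [π, even_iff_two_dvd] using ZMod.castHom_gcd_eq_zero_iff m 2 x
  exact ⟨(H2EquivOfOdd hkodd π.toIntLinearMap
    (ZMod.castHom_surjective (Nat.gcd_dvd_left m 2)) hker).toAddEquiv⟩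

/-- Let `k` be an odd positive integer and `m` any positive integer. Then the
second group cohomology `H²(D₂ₖ, ℤ/m)` of the dihedral group of order `2k` with coefficients
in `ℤ/m` (trivial action) is isomorphic, as an abelian group, to `ℤ/gcd(m, 2)`. -/
theorem stmt_4 (k m : ℕ) (hk : 0 < k) (hkodd : Odd k) (hm : 0 < m) :
    Nonempty
      ((groupCohomology (Rep.trivial ℤ (DihedralGroup k) (ZMod m)) 2) ≃+
        ZMod (Nat.gcd m 2)) :=
  stmt_4_general k m hkodd
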